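/- arXiv:1602.07501 — 4 statements merged into one kernel-verified Lean document; each statement's English description precedes it below -/
import Mathlib

section
/- Let $\Gamma$ be a finite connected graph with at least one edge, $A = \mathrm{Aut}(\Gamma)$, $\alpha$ a vertex of $\Gamma$, and $r$ a prime dividing $|A_\alpha|$ (the order of the stabilizer of $\alpha$). Then some vertex of $\Gamma$ has degree at least $r$. -/
/-- Let `Γ` be a finite connected graph with at least one edge, `α` a vertex, and `r` a
prime dividing the order of the stabilizer of `α` in the full automorphism group of `Γ`.
Then some vertex of `Γ` has degree at least `r`. -/
theorem degree_ge_of_prime_dvd_stabilizer {V : Type*} [Fintype V]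
    (Γ : SimpleGraph V) (hconn : Γ.Connected) (hedge : ∃ x y : V, Γ.Adj x y)
    (α : V) (r : ℕ) (hr : r.Prime)
    (hdvd : r ∣ Nat.card {σ : Equiv.Perm V //
      (∀ x y : V, Γ.Adj (σ x) (σ y) ↔ Γ.Adj x y) ∧ σ α = α}) :
    ∃ v : V, r ≤ Nat.card (Γ.neighborSet v) := by
  classical
  by_contra hcon
  push_neg at hcon
  -- the stabilizer as a subgroup
  set G : Subgroup (Equiv.Perm V) :=
    { carrier := {σ | (∀ x y : V, Γ.Adj (σ x) (σ y) ↔ Γ.Adj x y) ∧ σ α = α}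
      one_mem' := by simp
      mul_mem' := by
        rintro σ τ ⟨hσ, hσα⟩ ⟨hτ, hτα⟩
        refine ⟨fun x y => ?_, by simp [hσα, hτα]⟩
        simp only [Equiv.Perm.mul_apply]
        rw [hσ, hτ]
      inv_mem' := by
        rintro σ ⟨hσ, hσα⟩
        refine ⟨fun x y => ?_, by conv_lhs => rw [← hσα, Equiv.Perm.inv_def, Equiv.symm_apply_apply]⟩
        conv_rhs => rw [← Equiv.apply_symm_apply σ x, ← Equiv.apply_symm_apply σ y]
        rw [hσ]
        rfl } with hG
  have hcard : Nat.card G = Nat.card {σ : Equiv.Perm V //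
      (∀ x y : V, Γ.Adj (σ x) (σ y) ↔ Γ.Adj x y) ∧ σ α = α} := rfl
  rw [← hcard] at hdvd
  haveI : Fact r.Prime := ⟨hr⟩
  obtain ⟨⟨τ, hτG⟩, hord⟩ := exists_prime_orderOf_dvd_card' (G := G) r hdvd
  have hordτ : orderOf τ = r := by
    rw [← hord]
    exact orderOf_injective G.subtype Subtype.coe_injective ⟨τ, hτG⟩
  obtain ⟨hτ, hτα⟩ := hτG
  -- τ fixes every vertex
  have hstep : ∀ x u : V, τ x = x → Γ.Adj x u → τ u = u := by
    intro x u hfx h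
    have hfixk : ∀ k : ℕ, (τ ^ k) x = x := by
      intro k
      induction k with
      | zero => rfl
      | succ k ihk => rw [pow_succ, Equiv.Perm.mul_apply, hfx, ihk]
    have hadjk : ∀ k : ℕ, ∀ a b : V, Γ.Adj ((τ ^ k) a) ((τ ^ k) b) ↔ Γ.Adj a b := by
      intro k
      induction k with
      | zero => simp
      | succ k ihk =>
        intro a b
        rw [pow_succ, Equiv.Perm.mul_apply, Equiv.Perm.mul_apply, ihk, hτ]
    have hper : Function.IsPeriodicPt τ r u := by
      show τ^[r] u = u
      rw [Equiv.Perm.iterate_eq_pow, ← hordτ, pow_orderOf_eq_one]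
      rfl
    rcases (hr.eq_one_or_self_of_dvd _ hper.minimalPeriod_dvd) with h1 | h1
    · exact Function.minimalPeriod_eq_one_iff_isFixedPt.mp h1
    · exfalso
      have hinj : Function.Injective (fun k : Fin r => (⟨(τ ^ (k : ℕ)) u, by
          rw [SimpleGraph.mem_neighborSet, ← hfixk (k : ℕ)]
          exact (hadjk (k : ℕ) x u).mpr h⟩ : Γ.neighborSet x)) := by
        intro a b hab
        have := Function.iterate_injOn_Iio_minimalPeriod (f := ⇑τ) (x := u)
          (show (a : ℕ) ∈ Set.Iio (Function.minimalPeriod τ u) by rw [h1]; exact a.2)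
          (show (b : ℕ) ∈ Set.Iio (Function.minimalPeriod τ u) by rw [h1]; exact b.2)
          (by simpa [Equiv.Perm.iterate_eq_pow] using congrArg Subtype.val hab)
        exact Fin.ext this
      have := Nat.card_le_card_of_injective _ hinj
      rw [Nat.card_eq_fintype_card, Fintype.card_fin] at this
      exact absurd this (not_le.mpr (hcon x))
  have hwalk : ∀ {a b : V}, Γ.Walk a b → τ a = a → τ b = b := by
    intro a b w
    induction w with
    | nil => exact id
    | cons h p ih => exact fun ha => ih (hstep _ _ ha h)
  have hfix : ∀ v : V, τ v = v := fun v => hwalk ((hconn α v).some) hτα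
  have : τ = 1 := Equiv.ext fun v => hfix v
  rw [this, orderOf_one] at hordτ
  exact hr.one_lt.ne' hordτ.symm
end

section
/- Let $G$ be a finite group of odd order acting vertex-transitively on a connected graph $\Gamma$ whose valency is strictly less than the smallest prime divisor $p$ of $|G|$. Then for any vertex $\alpha$, $\gcd(|G|, |A_\alpha|) = 1$, where $A = \mathrm{Aut}(\Gamma)$ and $A_\alpha$ is the vertex stabilizer. -/
/-!
Suppose a prime `q` divides both `|G|` and `|A_α|`. Then `q ≥ p` exceeds the valency, and by
Cauchy's theorem `A_α` contains an automorphism `σ` of order `q`. If `σ` fixes a vertex `v`, it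
permutes the neighbours of `v` in orbits of size `1` or `q`; as there are fewer than `q` of
them, it fixes them all. By connectivity `σ` fixes every vertex, so `σ = 1`, a contradiction.
-/

open Equiv

theorem Function.IsPeriodicPt.isFixedPt_of_iterate_mem {α : Type*} {f : α → α} {x : α}
    {q : ℕ} (hq : q.Prime) (hx : IsPeriodicPt f q x) {s : Set α} [Finite s]
    (hs : ∀ n, f^[n] x ∈ s) (hcard : Nat.card s < q) : IsFixedPt f x := by
  rcases hq.eq_one_or_self_of_dvd _ hx.minimalPeriod_dvd with h1 | hq'
  · exact minimalPeriod_eq_one_iff_isFixedPt.mp h1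
  · have hinj : Injective fun i : Fin q => (⟨f^[i] x, hs i⟩ : s) := fun i j hij =>
      Fin.ext <| iterate_injOn_Iio_minimalPeriod (by rw [hq']; exact i.2) (by rw [hq']; exact j.2)
        (congrArg Subtype.val hij)
    have := Nat.card_le_card_of_injective _ hinj
    rw [Nat.card_fin] at this
    exact absurd hcard this.not_gt

namespace SimpleGraph

variable {V : Type*} (Γ : SimpleGraph V)

def autPerm : Subgroup (Perm V) where
  carrier := {σ | ∀ x y, Γ.Adj (σ x) (σ y) ↔ Γ.Adj x y}
  one_mem' _ _ := Iff.rfl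
  mul_mem' hσ hτ x y := (hσ _ _).trans (hτ x y)
  inv_mem' {σ} hσ x y := by simpa using (hσ (σ⁻¹ x) (σ⁻¹ y)).symm

variable {Γ}

theorem apply_eq_self_of_adj_of_pow_prime_eq_one {σ : Perm V} (hσ : σ ∈ Γ.autPerm) {q : ℕ}
    (hq : q.Prime) (hσq : σ ^ q = 1) {v w : V} [Finite (Γ.neighborSet v)]
    (hdeg : Nat.card (Γ.neighborSet v) < q) (hv : σ v = v) (hvw : Γ.Adj v w) : σ w = w := by
  have hper : Function.IsPeriodicPt σ q w := by
    rw [Function.IsPeriodicPt, Function.IsFixedPt, ← Perm.coe_pow, hσq, Perm.one_apply]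
  have hadj : ∀ n, σ^[n] w ∈ Γ.neighborSet v := by
    intro n
    induction n with
    | zero => exact hvw
    | succ n ih =>
      rw [Function.iterate_succ_apply', mem_neighborSet, ← hv, hσ]
      exact ih
  exact hper.isFixedPt_of_iterate_mem hq hadj hdeg

theorem Connected.forall_mem_of_adj_mem (hconn : Γ.Connected) {s : Set V} {α : V} (hα : α ∈ s)
    (hs : ∀ u w, u ∈ s → Γ.Adj u w → w ∈ s) (v : V) : v ∈ s := by
  induction (reachable_iff_reflTransGen α v).mp (hconn α v) with
  | refl => exact hα
  | tail _ hadj ih => exact hs _ _ ih hadj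

theorem Connected.eq_one_of_pow_prime_eq_one [Finite V] (hconn : Γ.Connected) {σ : Perm V}
    (hσ : σ ∈ Γ.autPerm) {α : V} (hα : σ α = α) {q : ℕ} (hq : q.Prime)
    (hσq : σ ^ q = 1) (hdeg : ∀ v, Nat.card (Γ.neighborSet v) < q) : σ = 1 :=
  Perm.ext <| hconn.forall_mem_of_adj_mem (s := {v | σ v = v}) hα fun u _ hu huw =>
    apply_eq_self_of_adj_of_pow_prime_eq_one hσ hq hσq (hdeg u) hu huw

theorem Connected.not_prime_dvd_card_autPerm_inf_stabilizer [Finite V] (hconn : Γ.Connected)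
    {q : ℕ} (hq : q.Prime) (hdeg : ∀ v, Nat.card (Γ.neighborSet v) < q) (α : V) :
    ¬ q ∣ Nat.card ↥(Γ.autPerm ⊓ MulAction.stabilizer (Perm V) α) := by
  intro hdvd
  have : Fact q.Prime := ⟨hq⟩
  obtain ⟨⟨σ, hσ⟩, hord⟩ := exists_prime_orderOf_dvd_card' q hdvd
  rw [Subgroup.orderOf_mk] at hord
  have hσ1 : σ = 1 :=
    hconn.eq_one_of_pow_prime_eq_one hσ.1 hσ.2 hq (hord ▸ pow_orderOf_eq_one σ) hdeg
  rw [hσ1, orderOf_one] at hord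
  exact hq.one_lt.ne hord

end SimpleGraph

theorem gcd_stabilizer_eq_one_general {G V : Type*} [Fintype V]
    (Γ : SimpleGraph V) (hconn : Γ.Connected)
    (hval : ∀ v : V, Nat.card (Γ.neighborSet v) < (Nat.card G).minFac) :
    ∀ α : V,
      Nat.gcd (Nat.card G)
        (Nat.card {σ : Equiv.Perm V //
          (∀ x y : V, Γ.Adj (σ x) (σ y) ↔ Γ.Adj x y) ∧ σ α = α}) = 1 := by
  intro α
  exact Nat.coprime_of_dvd fun q hq hqG => hconn.not_prime_dvd_card_autPerm_inf_stabilizer hq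
    (fun v => (hval v).trans_le (Nat.minFac_le_of_dvd hq.two_le hqG)) α

/-- Let `G` be a finite group of odd order acting (by graph automorphisms, via `φ`)
vertex-transitively on a connected graph `Γ` whose valency is strictly less than the
smallest prime divisor of `|G|`.  Then for any vertex `α`, `gcd(|G|, |A_α|) = 1`, where
`A_α` is the stabilizer of `α` in the full automorphism group of `Γ`. -/
theorem gcd_stabilizer_eq_one {G V : Type*} [Group G] [Fintype G] [Fintype V]
    (hodd : Odd (Nat.card G))
    (Γ : SimpleGraph V) (hconn : Γ.Connected)
    (φ : G →* Equiv.Perm V)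
    (haut : ∀ g : G, ∀ x y : V, Γ.Adj (φ g x) (φ g y) ↔ Γ.Adj x y)
    (htrans : ∀ u v : V, ∃ g : G, φ g u = v)
    (hval : ∀ v : V, Nat.card (Γ.neighborSet v) < (Nat.card G).minFac) :
    ∀ α : V,
      Nat.gcd (Nat.card G)
        (Nat.card {σ : Equiv.Perm V //
          (∀ x y : V, Γ.Adj (σ x) (σ y) ↔ Γ.Adj x y) ∧ σ α = α}) = 1 :=
  gcd_stabilizer_eq_one_general Γ hconn hval
end

section
/- Let $G$ be a finite group, $N = G \times G$, and $D = \{(g,g) : g \in G\}$ the diagonal subgroup. Suppose every element of $G$ is conjugate in $G$ to its inverse. Then for every $(g_1, g_2) \in N$ we have $(g_2, g_1) \in D (g_1, g_2) D$. -/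
open scoped Pointwise

/-- Let `G` be a finite group in which every element is conjugate to its inverse, let
`N = G × G` and `D` the diagonal subgroup.  Then for all `g₁, g₂`, the swapped pair
`(g₂, g₁)` lies in the double coset `D (g₁, g₂) D`; concretely there are `h₁, h₂ ∈ G`
with `(h₁,h₁) * (g₁,g₂) * (h₂,h₂) = (g₂,g₁)`. -/
theorem swap_mem_diagonal_doset {G : Type*} [Group G] [Fintype G]
    (hconj : ∀ g : G, IsConj g g⁻¹) :
    ∀ g₁ g₂ : G,
      (∃ h₁ h₂ : G, (h₁, h₁) * (g₁, g₂) * (h₂, h₂) = (g₂, g₁)) ∧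
      ((g₂, g₁) : G × G) ∈
        ({p : G × G | p.1 = p.2} : Set (G × G)) * {(g₁, g₂)} *
          ({p : G × G | p.1 = p.2} : Set (G × G)) := by
  intro g₁ g₂
  obtain ⟨c, hc'⟩ := isConj_iff.mp (hconj (g₂ * g₁⁻¹))
  have key : ∃ h₁ h₂ : G, (h₁, h₁) * (g₁, g₂) * (h₂, h₂) = ((g₂ : G), g₁) := by
    refine ⟨c, g₁⁻¹ * c⁻¹ * g₂, ?_⟩
    have h2 : c * g₂ * (g₁⁻¹ * c⁻¹ * g₂) = g₁ := by
      have : c * (g₂ * g₁⁻¹) * c⁻¹ = g₁ * g₂⁻¹ := by rw [hc']; group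
      calc c * g₂ * (g₁⁻¹ * c⁻¹ * g₂) = (c * (g₂ * g₁⁻¹) * c⁻¹) * g₂ := by group
        _ = (g₁ * g₂⁻¹) * g₂ := by rw [this]
        _ = g₁ := by group
    ext
    · simp; group
    · simpa using h2
  refine ⟨key, ?_⟩
  obtain ⟨h₁, h₂, h⟩ := key
  exact ⟨(h₁, h₁) * (g₁, g₂), ⟨(h₁, h₁), rfl, (g₁, g₂), rfl, rfl⟩, (h₂, h₂), rfl, h⟩
end

section
/- Let $G$ be a finite group, $H$ a core-free subgroup, and $S \subseteq G \setminus H$. If $\varphi : \langle H \cup S\rangle \to G$ is an injective group homomorphism with $\varphi(H) = H$, and if for every graph $\Sigma = \mathrm{Cos}(G,H,HTH)$ isomorphic to $\Gamma = \mathrm{Cos}(G,H,HSH)$ there exists $\tau \in \mathrm{Aut}(G)$ with $H^\tau = H$ and $HS^\tau H = HTH$ (i.e., $\Gamma$ is a GI-graph of $G$), then there exists $\tau \in \mathrm{Aut}(G)$ such that $H^\tau = H$ and $\langle H \cup S \rangle^\tau = \langle H \cup \varphi(S) \rangle$. -/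
open scoped Pointwise


/-- The adjacency relation of the coset (di)graph `Cos(G,K,D)` on right cosets of `K`:
`Kx → Ky` iff `y * x⁻¹` lies in the `K`-bi-invariant set determined by `D`. -/
def cosetRel {G : Type*} [Group G] (K : Subgroup G) (D : Set G) :
    Quotient (QuotientGroup.rightRel K) → Quotient (QuotientGroup.rightRel K) → Prop :=
  Quotient.lift₂ (fun x y => ∃ k₁ ∈ K, ∃ k₂ ∈ K, k₁ * (y * x⁻¹) * k₂ ∈ D)
    (by
      intro x y x' y' hx hy
      replace hx := QuotientGroup.rightRel_apply.mp hx
      replace hy := QuotientGroup.rightRel_apply.mp hy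
      apply propext
      constructor
      · rintro ⟨k₁, hk₁, k₂, hk₂, hm⟩
        refine ⟨k₁ * (y' * y⁻¹)⁻¹, K.mul_mem hk₁ (K.inv_mem hy), (x' * x⁻¹) * k₂,
          K.mul_mem hx hk₂, ?_⟩
        convert hm using 1
        group
      · rintro ⟨k₁, hk₁, k₂, hk₂, hm⟩
        refine ⟨k₁ * (y' * y⁻¹), K.mul_mem hk₁ hy, (x' * x⁻¹)⁻¹ * k₂,
          K.mul_mem (K.inv_mem hx) hk₂, ?_⟩
        convert hm using 1
        group)

/-!
Put `M = ⟨H, S⟩` and `Φ : M ≃* φ(M)`. As `G` is finite, `M` and `φ(M)` have the same index, so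
matching their right transversals arbitrarily extends `Φ` to a bijection `f` of `G` with
`f (m x) = Φ m * f x`. Then `f y * (f x)⁻¹ = Φ (y * x⁻¹)` whenever `y * x⁻¹ ∈ M`, so `f` permutes
the right cosets of `H` and carries `Cos(G,H,HSH)` onto `Cos(G,H,Hφ(S)H)`. The GI property gives
`τ` with `H S^τ H = H φ(S) H`, and `⟨H, X⟩` depends only on `H X H`.
-/

section

open Subgroup

variable {G : Type*} [Group G]

lemma cosetRel_iff_exists (K : Subgroup G) (D : Set G) (u v : Quotient (QuotientGroup.rightRel K)) :
    cosetRel K D u v ↔ ∃ x y : G, ⟦x⟧ = u ∧ ⟦y⟧ = v ∧ y * x⁻¹ ∈ D := by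
  induction u using Quotient.inductionOn with | h x => ?_
  induction v using Quotient.inductionOn with | h y => ?_
  simp only [Quotient.eq, QuotientGroup.rightRel_apply]
  constructor
  · rintro ⟨k₁, hk₁, k₂, hk₂, hD⟩
    refine ⟨k₂⁻¹ * x, k₁ * y, by simpa using hk₂, by simpa using K.inv_mem hk₁, ?_⟩
    simpa [mul_assoc] using hD
  · rintro ⟨x', y', hx, hy, hD⟩
    refine ⟨y' * y⁻¹, by simpa using K.inv_mem hy, x * x'⁻¹, hx, ?_⟩
    simpa [mul_assoc] using hD

lemma Subgroup.closure_union_mul_mul (H : Subgroup G) (A : Set G) :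
    closure ((H : Set G) ∪ H * A * H) = closure ((H : Set G) ∪ A) := by
  have hH : (H : Set G) ⊆ closure ((H : Set G) ∪ A) :=
    Set.subset_union_left.trans subset_closure
  have hA : A ⊆ closure ((H : Set G) ∪ A) := Set.subset_union_right.trans subset_closure
  refine le_antisymm ((closure_le _).mpr (Set.union_subset hH (mul_subset (mul_subset hH hA) hH)))
    (closure_mono (Set.union_subset_union_right _ ?_))
  exact (Set.subset_mul_right A H.one_mem).trans (Set.subset_mul_left _ H.one_mem)

lemma map_mem_image_mul_mul_iff {M : Subgroup G} {φ : M →* G} (hφ : Function.Injective φ)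
    {A B : Set G} (hA : A ⊆ M) (hB : B ⊆ M) (m : M) :
    φ m ∈ φ '' {m : M | (m : G) ∈ A} * φ '' {m : M | (m : G) ∈ B} * φ '' {m : M | (m : G) ∈ A} ↔
      (m : G) ∈ A * B * A := by
  have himage : ∀ C ⊆ (M : Set G), M.subtype '' {m : M | (m : G) ∈ C} = C := fun C hC => by
    rw [coe_subtype]
    exact (Subtype.image_preimage_coe _ C).trans (Set.inter_eq_right.mpr hC)
  rw [← Set.image_mul, ← Set.image_mul, hφ.mem_set_image, ← M.subtype_injective.mem_set_image,
    Set.image_mul, Set.image_mul, himage A hA, himage B hB, coe_subtype]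

lemma exists_equiv_map_mul [Finite G] {M M' : Subgroup G} (Φ : M ≃* M') :
    ∃ f : G ≃ G, ∀ (m : M) (x : G), f (m * x) = Φ m * f x := by
  obtain ⟨T, hT, -⟩ := M.exists_isComplement_right 1
  obtain ⟨T', hT', -⟩ := M'.exists_isComplement_right 1
  have hindex : M.index = M'.index :=
    Nat.eq_of_mul_eq_mul_right Nat.card_pos <| by
      rw [M.index_mul_card, Nat.card_congr Φ.toEquiv, M'.index_mul_card]
  obtain ⟨β⟩ := Finite.card_eq.mp (by rw [hT.card_right, hT'.card_right, hindex] :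
    Nat.card T = Nat.card T')
  refine ⟨hT.equiv.trans ((Φ.toEquiv.prodCongr β).trans hT'.equiv.symm), fun m x => ?_⟩
  simp only [Equiv.trans_apply, hT.equiv_mul_left, Equiv.prodCongr_apply, Prod.map]
  rw [hT'.equiv_symm_apply, hT'.equiv_symm_apply]
  simp [mul_assoc]

section EquivariantBijection

variable {M M' : Subgroup G} (Φ : M ≃* M') {f : G ≃ G}
  (hf : ∀ (m : M) (x : G), f (m * x) = Φ m * f x)
include hf

lemma mul_inv_eq_iff_of_map_mul (m : M) (x y : G) :
    f y * (f x)⁻¹ = Φ m ↔ y * x⁻¹ = m := by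
  rw [mul_inv_eq_iff_eq_mul, mul_inv_eq_iff_eq_mul, ← hf, f.apply_eq_iff_eq]

lemma mul_inv_mem_iff_of_map_mul {A A' : Set G} (hA : A ⊆ M) (hA' : A' ⊆ M')
    (hΦA : ∀ m : M, (Φ m : G) ∈ A' ↔ (m : G) ∈ A) (x y : G) :
    f y * (f x)⁻¹ ∈ A' ↔ y * x⁻¹ ∈ A := by
  constructor
  · intro h
    have hval : f y * (f x)⁻¹ = Φ (Φ.symm ⟨_, hA' h⟩) := by simp
    rw [(mul_inv_eq_iff_of_map_mul Φ hf _ x y).mp hval, ← hΦA, hval.symm]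
    exact h
  · intro h
    rw [(mul_inv_eq_iff_of_map_mul Φ hf ⟨_, hA h⟩ x y).mpr rfl, hΦA]
    exact h

end EquivariantBijection

theorem exists_equiv_cosetRel_iff [Finite G] {H M M' : Subgroup G} (hHM : H ≤ M) (hHM' : H ≤ M')
    {D D' : Set G} (hD : D ⊆ M) (hD' : D' ⊆ M') (Φ : M ≃* M')
    (hΦH : ∀ m : M, (Φ m : G) ∈ H ↔ (m : G) ∈ H) (hΦD : ∀ m : M, (Φ m : G) ∈ D' ↔ (m : G) ∈ D) :
    ∃ e : Quotient (QuotientGroup.rightRel H) ≃ Quotient (QuotientGroup.rightRel H),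
      ∀ u v, cosetRel H D u v ↔ cosetRel H D' (e u) (e v) := by
  obtain ⟨f, hf⟩ := exists_equiv_map_mul Φ
  have hfD := mul_inv_mem_iff_of_map_mul Φ hf hD hD' hΦD
  let e : Quotient (QuotientGroup.rightRel H) ≃ Quotient (QuotientGroup.rightRel H) :=
    Quotient.congr f fun x y => by
      simpa only [QuotientGroup.rightRel_apply, SetLike.mem_coe] using
        (mul_inv_mem_iff_of_map_mul Φ hf hHM hHM' hΦH x y).symm
  have he : ∀ x, e ⟦x⟧ = ⟦f x⟧ := Quotient.congr_mk _ _
  refine ⟨e, fun u v => ?_⟩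
  rw [cosetRel_iff_exists, cosetRel_iff_exists]
  constructor
  · rintro ⟨x, y, rfl, rfl, h⟩
    exact ⟨f x, f y, (he x).symm, (he y).symm, (hfD x y).mpr h⟩
  · rintro ⟨x, y, hx, hy, h⟩
    refine ⟨f.symm x, f.symm y, e.injective ?_, e.injective ?_, (hfD _ _).mp (by simpa using h)⟩
    · rw [he, f.apply_symm_apply, hx]
    · rw [he, f.apply_symm_apply, hy]

end

theorem gi_graph_component_general {G : Type*} [Group G] [Fintype G]
    (H : Subgroup G)
    (S : Set G) (hS : S ⊆ ((H : Set G))ᶜ)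
    (φ : ↥(Subgroup.closure ((H : Set G) ∪ S)) →* G) (hinj : Function.Injective φ)
    (hφH : ⇑φ '' {m : ↥(Subgroup.closure ((H : Set G) ∪ S)) | (m : G) ∈ H} =
      (H : Set G))
    (hGI : ∀ T : Set G, T ⊆ ((H : Set G))ᶜ →
      (∃ e : Quotient (QuotientGroup.rightRel H) ≃ Quotient (QuotientGroup.rightRel H),
        ∀ u v, cosetRel H ((H : Set G) * S * (H : Set G)) u v ↔
          cosetRel H ((H : Set G) * T * (H : Set G)) (e u) (e v)) →
      ∃ τ : MulAut G, ⇑τ '' (H : Set G) = (H : Set G) ∧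
        (H : Set G) * (⇑τ '' S) * (H : Set G) = (H : Set G) * T * (H : Set G)) :
    ∃ τ : MulAut G, ⇑τ '' (H : Set G) = (H : Set G) ∧
      Subgroup.map τ.toMonoidHom (Subgroup.closure ((H : Set G) ∪ S)) =
        Subgroup.closure ((H : Set G) ∪
          (⇑φ '' {m : ↥(Subgroup.closure ((H : Set G) ∪ S)) | (m : G) ∈ S})) := by
  set T := ⇑φ '' {m : ↥(Subgroup.closure ((H : Set G) ∪ S)) | (m : G) ∈ S}
  have hHM : H ≤ Subgroup.closure ((H : Set G) ∪ S) := fun _ hh =>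
    Subgroup.subset_closure (Or.inl hh)
  have hSM : S ⊆ Subgroup.closure ((H : Set G) ∪ S) := fun _ hs =>
    Subgroup.subset_closure (Or.inr hs)
  have hHR : H ≤ φ.range := by
    rw [← SetLike.coe_subset_coe, MonoidHom.coe_range]
    exact hφH.ge.trans (Set.image_subset_range _ _)
  have hΦH : ∀ m, φ m ∈ H ↔ (m : G) ∈ H := fun m => by
    have := hinj.mem_set_image (s := {m | (m : G) ∈ H}) (a := m)
    rwa [hφH] at this
  have hΦD := map_mem_image_mul_mul_iff hinj hHM hSM
  simp only [SetLike.mem_coe, hφH] at hΦD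
  obtain ⟨e, he⟩ := exists_equiv_cosetRel_iff hHM hHR
    (Subgroup.mul_subset (Subgroup.mul_subset hHM hSM) hHM)
    (Subgroup.mul_subset (Subgroup.mul_subset hHR (Set.image_subset_range _ _)) hHR)
    (MonoidHom.ofInjective hinj) hΦH hΦD
  have hT : T ⊆ (H : Set G)ᶜ := by
    rintro _ ⟨m, hm, rfl⟩ hmH
    exact hS hm ((hΦH m).mp hmH)
  obtain ⟨τ, hτH, hτS⟩ := hGI T hT ⟨e, he⟩
  refine ⟨τ, hτH, ?_⟩
  rw [MonoidHom.map_closure, Set.image_union, MulEquiv.coe_toMonoidHom, hτH,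
    ← Subgroup.closure_union_mul_mul, hτS, Subgroup.closure_union_mul_mul]

/-- Let `H` be a core-free subgroup of a finite group `G` and `S ⊆ G \ H`, and suppose
`Γ = Cos(G,H,HSH)` is a GI-graph of `G`: every coset graph `Cos(G,H,HTH)` isomorphic to
`Γ` arises from `S` via an automorphism of `G` fixing `H` setwise.  Then for every
embedding `φ : ⟨H ∪ S⟩ → G` with `φ(H) = H` there is `τ ∈ Aut(G)` with `H^τ = H` and
`⟨H ∪ S⟩^τ = ⟨H ∪ φ(S)⟩`. -/
theorem gi_graph_component {G : Type*} [Group G] [Fintype G]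
    (H : Subgroup G) (hcf : ∀ N : Subgroup G, N.Normal → N ≤ H → N = ⊥)
    (S : Set G) (hS : S ⊆ ((H : Set G))ᶜ)
    (φ : ↥(Subgroup.closure ((H : Set G) ∪ S)) →* G) (hinj : Function.Injective φ)
    (hφH : ⇑φ '' {m : ↥(Subgroup.closure ((H : Set G) ∪ S)) | (m : G) ∈ H} =
      (H : Set G))
    (hGI : ∀ T : Set G, T ⊆ ((H : Set G))ᶜ →
      (∃ e : Quotient (QuotientGroup.rightRel H) ≃ Quotient (QuotientGroup.rightRel H),
        ∀ u v, cosetRel H ((H : Set G) * S * (H : Set G)) u v ↔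
          cosetRel H ((H : Set G) * T * (H : Set G)) (e u) (e v)) →
      ∃ τ : MulAut G, ⇑τ '' (H : Set G) = (H : Set G) ∧
        (H : Set G) * (⇑τ '' S) * (H : Set G) = (H : Set G) * T * (H : Set G)) :
    ∃ τ : MulAut G, ⇑τ '' (H : Set G) = (H : Set G) ∧
      Subgroup.map τ.toMonoidHom (Subgroup.closure ((H : Set G) ∪ S)) =
        Subgroup.closure ((H : Set G) ∪
          (⇑φ '' {m : ↥(Subgroup.closure ((H : Set G) ∪ S)) | (m : G) ∈ S})) :=
  gi_graph_component_general H S hS φ hinj hφH hGI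
end
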